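/- arXiv:1808.09567 — 7 statements merged into one kernel-verified Lean document; each statement's English description precedes it below -/
import Mathlib

section
/- Let S be a semitopological monoid in which all left shifts (or all right shifts) are open maps, and let ~ be a congruence on S. Then the quotient map π : S → S/~ is an open map. -/
namespace Con

variable {S : Type*}

theorem preimage_mk_image_mk [Mul S] (c : Con S) (U : Set S) :
    Quotient.mk c.toSetoid ⁻¹' (Quotient.mk c.toSetoid '' U) = {x | ∃ u ∈ U, c x u} := by
  ext x
  simp only [Set.mem_preimage, Set.mem_image, Set.mem_ofPred_eq]
  exact exists_congr fun u => and_congr_right fun _ => Quotient.eq.trans ⟨c.symm, c.symm⟩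

variable [Monoid S] [TopologicalSpace S] (c : Con S)

/-- If `x ~ u ∈ U`, then `x * y ~ u * y`, so the open set `x * {y | u * y ∈ U}` is a
neighbourhood of `x = x * 1` inside the saturation of `U`. -/
theorem isOpenMap_mk_of_isOpenMap_mul_left (hcont : ∀ a : S, Continuous (a * ·))
    (hopen : ∀ a : S, IsOpenMap (a * ·)) : IsOpenMap (Quotient.mk c.toSetoid) := by
  intro U hU
  change IsOpen (Quotient.mk c.toSetoid ⁻¹' _)
  rw [preimage_mk_image_mk, isOpen_iff_forall_mem_open]
  rintro x ⟨u, hu, hxu⟩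
  refine ⟨(x * ·) '' ((u * ·) ⁻¹' U), ?_, hopen x _ ((hcont u).isOpen_preimage U hU),
    ⟨1, by simpa using hu, mul_one x⟩⟩
  rintro _ ⟨y, hy, rfl⟩
  exact ⟨u * y, hy, c.mul hxu (c.refl y)⟩

theorem isOpenMap_mk_of_isOpenMap_mul_right (hcont : ∀ a : S, Continuous (· * a))
    (hopen : ∀ a : S, IsOpenMap (· * a)) : IsOpenMap (Quotient.mk c.toSetoid) := by
  intro U hU
  change IsOpen (Quotient.mk c.toSetoid ⁻¹' _)
  rw [preimage_mk_image_mk, isOpen_iff_forall_mem_open]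
  rintro x ⟨u, hu, hxu⟩
  refine ⟨(· * x) '' ((· * u) ⁻¹' U), ?_, hopen x _ ((hcont u).isOpen_preimage U hU),
    ⟨1, by simpa using hu, one_mul x⟩⟩
  rintro _ ⟨y, hy, rfl⟩
  exact ⟨y * u, hy, c.mul (c.refl y) hxu⟩

end Con

/-- Let S be a semitopological monoid in which all left shifts (or all right shifts)
are open maps, and let ~ be a congruence on S. Then the quotient map
π : S → S/~ is an open map. -/
theorem stmt_0 {S : Type*} [Monoid S] [TopologicalSpace S]
    (hcont : ∀ a : S, Continuous (fun x => a * x) ∧ Continuous (fun x => x * a))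
    (hopen : (∀ a : S, IsOpenMap (fun x => a * x)) ∨ (∀ a : S, IsOpenMap (fun x => x * a)))
    (c : Con S) :
    IsOpenMap (Quotient.mk c.toSetoid : S → Quotient c.toSetoid) := by
  rcases hopen with hleft | hright
  · exact c.isOpenMap_mk_of_isOpenMap_mul_left (fun a => (hcont a).1) hleft
  · exact c.isOpenMap_mk_of_isOpenMap_mul_right (fun a => (hcont a).2) hright
end

section
/- Let S be a topological semigroup with open shifts. Then the semiregularization S_sr (S with the topology generated by the regular open sets of S) is a topological semigroup under the same multiplication. -/
open Topology

/-- The semiregularization topology: the topology generated by the regular open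
sets (sets U with Int(Cl(U)) = U) of the original topology. -/
def srTop (X : Type*) [TopologicalSpace X] : TopologicalSpace X :=
  TopologicalSpace.generateFrom {U : Set X | interior (closure U) = U}

/-! A map that is continuous and open in each variable sends `Int Cl V × Int Cl W` into
`Int Cl` of the image of `V × W` (one variable at a time). So if a box `V × W` of the original
topology is multiplied into a regular open `U = Int Cl U`, so is the box of regular open sets
`Int Cl V × Int Cl W` around the same point. -/

open Set

section

variable {X Y Z : Type*}

theorem IsOpenMap.image_interior_closure_subset [TopologicalSpace X] [TopologicalSpace Y]
    {f : X → Y} (hf : IsOpenMap f) (hc : Continuous f) (s : Set X) :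
    f '' interior (closure s) ⊆ interior (closure (f '' s)) :=
  (hf.image_interior_subset _).trans (interior_mono (image_closure_subset_closure_image hc))

theorem Set.image2_interior_closure_left_subset [TopologicalSpace X] [TopologicalSpace Z]
    {f : X → Y → Z}
    (hc : ∀ y, Continuous (f · y)) (ho : ∀ y, IsOpenMap (f · y)) (s : Set X) (t : Set Y) :
    image2 f (interior (closure s)) t ⊆ interior (closure (image2 f s t)) :=
  image2_subset_iff_right.2 fun y hy => ((ho y).image_interior_closure_subset (hc y) s).trans
    (interior_mono (closure_mono (image_subset_image2_left hy)))

theorem Set.image2_interior_closure_right_subset [TopologicalSpace Y] [TopologicalSpace Z]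
    {f : X → Y → Z}
    (hc : ∀ x, Continuous (f x)) (ho : ∀ x, IsOpenMap (f x)) (s : Set X) (t : Set Y) :
    image2 f s (interior (closure t)) ⊆ interior (closure (image2 f s t)) :=
  image2_subset_iff_left.2 fun x hx => ((ho x).image_interior_closure_subset (hc x) t).trans
    (interior_mono (closure_mono (image_subset_image2_right hx)))

theorem Set.image2_interior_closure_subset [TopologicalSpace X] [TopologicalSpace Y]
    [TopologicalSpace Z] {f : X → Y → Z}
    (hcl : ∀ y, Continuous (f · y)) (hol : ∀ y, IsOpenMap (f · y))
    (hcr : ∀ x, Continuous (f x)) (hor : ∀ x, IsOpenMap (f x)) (s : Set X) (t : Set Y) :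
    image2 f (interior (closure s)) (interior (closure t)) ⊆ interior (closure (image2 f s t)) :=
  calc image2 f (interior (closure s)) (interior (closure t))
      ⊆ interior (closure (image2 f (interior (closure s)) t)) :=
        image2_interior_closure_right_subset hcr hor _ t
    _ ⊆ interior (closure (interior (closure (image2 f s t)))) :=
        interior_mono (closure_mono (image2_interior_closure_left_subset hcl hol s t))
    _ = interior (closure (image2 f s t)) := interior_closure_idem

theorem isOpen_srTop_interior_closure [TopologicalSpace X] (s : Set X) :
    IsOpen[srTop X] (interior (closure s)) :=
  TopologicalSpace.GenerateOpen.basic _ interior_closure_idem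

end

/-- Let S be a topological semigroup with open shifts. Then the semiregularization
S_sr is a topological semigroup under the same multiplication. -/
theorem stmt_6 {S : Type*} [Semigroup S] [TopologicalSpace S]
    (hmul : Continuous fun p : S × S => p.1 * p.2)
    (hshift : ∀ a : S, IsOpenMap (fun x => a * x) ∧ IsOpenMap (fun x => x * a)) :
    Continuous[@instTopologicalSpaceProd S S (srTop S) (srTop S), srTop S]
      (fun p : S × S => p.1 * p.2) := by
  refine continuous_generateFrom_iff.mpr fun U (hU : interior (closure U) = U) => ?_
  rw [@isOpen_iff_forall_mem_open (S × S) (@instTopologicalSpaceProd S S (srTop S) (srTop S))]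
  rintro ⟨a, b⟩ hab
  obtain ⟨V, W, hV, hW, haV, hbW, hVW⟩ :=
    isOpen_prod_iff.mp ((hU ▸ isOpen_interior : IsOpen U).preimage hmul) a b hab
  refine ⟨interior (closure V) ×ˢ interior (closure W), ?_,
    @IsOpen.prod S S (srTop S) (srTop S) _ _
      (isOpen_srTop_interior_closure V) (isOpen_srTop_interior_closure W),
    hV.subset_interior_closure haV, hW.subset_interior_closure hbW⟩
  rintro ⟨x, y⟩ ⟨hx, hy⟩
  have hVW' : image2 (· * ·) V W ⊆ U :=
    image2_subset_iff.2 fun v hv w hw => hVW (mk_mem_prod hv hw)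
  rw [← hU]
  exact interior_mono (closure_mono hVW') <| image2_interior_closure_subset
    (fun w => hmul.comp (continuous_id.prodMk continuous_const)) (fun w => (hshift w).2)
    (fun v => hmul.comp (continuous_const.prodMk continuous_id)) (fun v => (hshift v).1)
    V W (mem_image2_of_mem hx hy)
end

section
/- In any topological space S with a jointly continuous semigroup operation and open shifts, for open sets V, W one has Int(Cl(V)) · Int(Cl(W)) ⊆ Int(Cl(V·W)). -/
open Pointwise

/-! Joint continuity of the product gives `Cl V · Cl W ⊆ Cl (V·W)`, and openness of left
shifts makes `Int (Cl V) · Int (Cl W)`, a union of left shifts of an open set, open; an open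
subset of `Cl (V·W)` lies in its interior. -/

section

variable {M : Type*} [Mul M] [TopologicalSpace M]

theorem closure_mul_closure_subset_closure_mul (hmul : Continuous fun p : M × M => p.1 * p.2)
    (s t : Set M) : closure s * closure t ⊆ closure (s * t) :=
  Set.mul_subset_iff.2 fun _ hx _ hy =>
    map_mem_closure₂ hmul hx hy fun _ ha _ hb => Set.mul_mem_mul ha hb

theorem IsOpen.mul_left_of_isOpenMap (hshift : ∀ a : M, IsOpenMap (a * ·)) (s : Set M)
    {t : Set M} (ht : IsOpen t) : IsOpen (s * t) := by
  rw [← Set.iUnion_mul_left_image]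
  exact isOpen_biUnion fun a _ => hshift a t ht

end

theorem stmt_8_general {S : Type*} [Semigroup S] [TopologicalSpace S]
    (hmul : Continuous fun p : S × S => p.1 * p.2)
    (hshift : ∀ a : S, IsOpenMap (fun x => a * x) ∧ IsOpenMap (fun x => x * a))
    (V W : Set S) :
    interior (closure V) * interior (closure W) ⊆ interior (closure (V * W)) :=
  interior_maximal
    ((Set.mul_subset_mul interior_subset interior_subset).trans
      (closure_mul_closure_subset_closure_mul hmul V W))
    (isOpen_interior.mul_left_of_isOpenMap (fun a => (hshift a).1) _)

/-- In a topological space with jointly continuous semigroup operation and open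
shifts, for open sets V, W we have Int(Cl(V)) · Int(Cl(W)) ⊆ Int(Cl(V·W)). -/
theorem stmt_8 {S : Type*} [Semigroup S] [TopologicalSpace S]
    (hmul : Continuous fun p : S × S => p.1 * p.2)
    (hshift : ∀ a : S, IsOpenMap (fun x => a * x) ∧ IsOpenMap (fun x => x * a))
    (V W : Set S) (hV : IsOpen V) (hW : IsOpen W) :
    interior (closure V) * interior (closure W) ⊆ interior (closure (V * W)) :=
  stmt_8_general hmul hshift V W
end

section
/- Let S be a cancellative topological semigroup with open shifts. Then the monoid operation induced on the T₀-reflection (Kolmogorov quotient) of the semiregularization S_sr is cancellative. -/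
open Set TopologicalSpace

theorem inseparable_generateFrom_iff {X : Type*} {G : Set (Set X)} {x y : X} :
    @Inseparable X (generateFrom G) x y ↔ ∀ U ∈ G, (x ∈ U ↔ y ∈ U) := by
  let := generateFrom G
  refine ⟨fun h U hU => inseparable_iff_forall_isOpen.mp h U (GenerateOpen.basic U hU),
    fun h => ?_⟩
  rw [inseparable_iff_forall_isOpen]
  intro s hs
  induction hs with
  | basic U hU => exact h U hU
  | univ => simp
  | inter s t _ _ hs ht => simp [hs, ht]
  | sUnion T _ hT => simp only [mem_sUnion]; exact exists_congr fun t => and_congr_right (hT t)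

theorem IsOpenMap.preimage_interior_closure_image {X Y : Type*} [TopologicalSpace X]
    [TopologicalSpace Y] {f : X → Y} (ho : IsOpenMap f) (hc : Continuous f)
    (hi : Function.Injective f) (U : Set X) :
    f ⁻¹' interior (closure (f '' U)) = interior (closure U) := by
  rw [ho.preimage_interior_eq_interior_preimage hc, ho.preimage_closure_eq_closure_preimage hc,
    preimage_image_eq _ hi]

theorem inseparable_srTop_of_map {X Y : Type*} [TopologicalSpace X] [TopologicalSpace Y]
    {f : X → Y} (ho : IsOpenMap f) (hc : Continuous f) (hi : Function.Injective f) {x y : X}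
    (h : @Inseparable Y (srTop Y) (f x) (f y)) : @Inseparable X (srTop X) x y := by
  rw [srTop, inseparable_generateFrom_iff] at h ⊢
  intro U (hU : interior (closure U) = U)
  rw [← hU, ← ho.preimage_interior_closure_image hc hi]
  exact h _ interior_closure_idem

/-- Let S be a cancellative topological semigroup with open shifts. Then the
operation induced on the T₀-reflection (Kolmogorov quotient) of the
semiregularization S_sr is cancellative: the induced operation satisfies
mk(c·x) = mk(c)·mk(x), so cancellativity says mk(c·x) = mk(c·y) → mk x = mk y
(and the right-sided version). -/
theorem stmt_13 {S : Type*} [Semigroup S] [TopologicalSpace S]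
    (hmul : Continuous fun p : S × S => p.1 * p.2)
    (hshift : ∀ a : S, IsOpenMap (fun x => a * x) ∧ IsOpenMap (fun x => x * a))
    (hcancel : ∀ a x y : S, (a * x = a * y → x = y) ∧ (x * a = y * a → x = y)) :
    ∀ c x y : S,
      (@SeparationQuotient.mk S (srTop S) (c * x) =
          @SeparationQuotient.mk S (srTop S) (c * y) →
        @SeparationQuotient.mk S (srTop S) x = @SeparationQuotient.mk S (srTop S) y) ∧
      (@SeparationQuotient.mk S (srTop S) (x * c) =
          @SeparationQuotient.mk S (srTop S) (y * c) →
        @SeparationQuotient.mk S (srTop S) x = @SeparationQuotient.mk S (srTop S) y) := by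
  have : ContinuousMul S := ⟨hmul⟩
  intro c x y
  simp only [SeparationQuotient.mk_eq_mk]
  exact ⟨inseparable_srTop_of_map (hshift c).1 (continuous_const_mul c)
      fun a b => (hcancel c a b).1,
    inseparable_srTop_of_map (hshift c).2 (continuous_mul_const c)
      fun a b => (hcancel c a b).2⟩
end

section
/- The nonnegative reals [0,∞) with addition, endowed with the topology generated by the sets [a,∞) for a ≥ 0, form a cancellative compact topological monoid with open shifts which is not a group. -/
open Topology

/-- The upper-ray topology on [0, ∞): generated by the sets [a, ∞), a ≥ 0. -/
def upperTop : TopologicalSpace {x : ℝ // 0 ≤ x} :=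
  TopologicalSpace.generateFrom
    (Set.range fun a : {x : ℝ // 0 ≤ x} => {x : {x : ℝ // 0 ≤ x} | a ≤ x})

/-!
The rays `[a, ∞)` generate exactly the Alexandrov topology whose open sets are the upper sets, so
every claim is order-theoretic. The product of two such topologies is again the upper-set
topology, so the monotone addition map is continuous; the only open set containing `0 = ⊥` is
the whole space, which gives compactness; and `a + U` is again an upper set because `a + x ≤ y`
means `y = a + (x + c)` for some `c ≥ 0`. Finally no nonzero element has an additive inverse,
since a sum of nonnegative elements vanishes only if both do.
-/

open Set Filter TopologicalSpace

theorem generateFrom_range_Ici_eq_upperSet (α : Type*) [Preorder α] :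
    generateFrom (range Ici) = upperSet α := by
  refine le_antisymm ?_ (le_generateFrom ?_)
  · let := generateFrom (range (Ici : α → Set α))
    intro U (hU : IsUpperSet U)
    rw [← hU.upperClosure, coe_upperClosure]
    exact isOpen_biUnion fun a _ => GenerateOpen.basic _ ⟨a, rfl⟩
  · rintro _ ⟨a, rfl⟩
    exact isUpperSet_Ici a

namespace Topology.IsUpperSet

variable {α β : Type*} [TopologicalSpace α] [TopologicalSpace β]

instance prod [Preorder α] [Preorder β] [Topology.IsUpperSet α] [Topology.IsUpperSet β] :
    Topology.IsUpperSet (α × β) :=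
  Topology.isUpperSet_iff_nhds.2 fun ⟨a, b⟩ => by
    rw [nhds_prod_eq, nhds_eq_principal_Ici, nhds_eq_principal_Ici, prod_principal_principal,
      Ici_prod_eq]

instance compactSpace [Preorder α] [OrderBot α] [Topology.IsUpperSet α] : CompactSpace α :=
  ⟨by simpa using (isCompact_singleton (x := (⊥ : α))).nhdsKer⟩

instance continuousAdd [Add α] [Preorder α] [AddLeftMono α] [AddRightMono α]
    [Topology.IsUpperSet α] : ContinuousAdd α :=
  ⟨IsUpperSet.monotone_iff_continuous.1 (monotone_fst.add monotone_snd)⟩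

variable [AddCommMonoid α] [PartialOrder α] [CanonicallyOrderedAdd α] [Topology.IsUpperSet α]

theorem isOpenMap_add_left (a : α) : IsOpenMap (a + ·) := by
  intro U hU
  rw [isOpen_iff_isUpperSet] at hU ⊢
  rintro _ y hxy ⟨x, hx, rfl⟩
  obtain ⟨c, rfl⟩ := exists_add_of_le hxy
  exact ⟨x + c, hU le_self_add hx, (add_assoc a x c).symm⟩

theorem isOpenMap_add_right (a : α) : IsOpenMap (· + a) := by
  simpa only [add_comm] using isOpenMap_add_left a

end Topology.IsUpperSet

theorem isUpperSet_upperTop : @Topology.IsUpperSet _ upperTop _ :=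
  @Topology.IsUpperSet.mk _ upperTop _ (generateFrom_range_Ici_eq_upperSet _)

theorem not_forall_exists_add_eq_zero {α : Type*} [AddCommMonoid α] [PartialOrder α]
    [CanonicallyOrderedAdd α] [Nontrivial α] :
    ¬∀ x : α, ∃ y, x + y = 0 := by
  intro h
  obtain ⟨x, hx⟩ := exists_ne (0 : α)
  obtain ⟨y, hy⟩ := h x
  exact hx (add_eq_zero.1 hy).1

/-- [0, ∞) with addition and the topology generated by the rays [a, ∞) is a
cancellative compact topological monoid with open shifts which is not a group. -/
theorem stmt_14 :
    Continuous[@instTopologicalSpaceProd _ _ upperTop upperTop, upperTop]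
      (fun p : {x : ℝ // 0 ≤ x} × {x : ℝ // 0 ≤ x} => p.1 + p.2) ∧
    @CompactSpace {x : ℝ // 0 ≤ x} upperTop ∧
    (∀ a : {x : ℝ // 0 ≤ x},
      @IsOpenMap _ _ upperTop upperTop (fun x => a + x) ∧
      @IsOpenMap _ _ upperTop upperTop (fun x => x + a)) ∧
    (∀ a x y : {x : ℝ // 0 ≤ x}, (a + x = a + y → x = y) ∧ (x + a = y + a → x = y)) ∧
    ¬(∀ x : {x : ℝ // 0 ≤ x}, ∃ y, x + y = 0) := by
  let := upperTop
  have := isUpperSet_upperTop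
  exact ⟨continuous_add, inferInstance,
    fun a => ⟨IsUpperSet.isOpenMap_add_left a, IsUpperSet.isOpenMap_add_right a⟩,
    fun _ _ _ => ⟨add_left_cancel, add_right_cancel⟩, not_forall_exists_add_eq_zero⟩
end

section
/- If S is a semitopological monoid with open left or right shifts, then S/~, where ~ is the smallest closed congruence on S, is the Hausdorff reflection of S: every continuous map from S to a Hausdorff space factors uniquely through the quotient map S → S/~. -/
/-- Let S be a semitopological monoid with open left (or right) shifts and let
~ be the smallest closed congruence on S. Then S/~ is the Hausdorff reflection
of S: S/~ is Hausdorff and every continuous map from S to a Hausdorff space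
factors uniquely through the quotient map S → S/~. -/
theorem stmt_18 {S : Type u} [Monoid S] [TopologicalSpace S]
    (hcont : ∀ a : S, Continuous (fun x => a * x) ∧ Continuous (fun x => x * a))
    (hopen : (∀ a : S, IsOpenMap (fun x => a * x)) ∨ (∀ a : S, IsOpenMap (fun x => x * a)))
    (c : Con S)
    (hclosed : IsClosed {p : S × S | c p.1 p.2})
    (hsmall : ∀ d : Con S, IsClosed {p : S × S | d p.1 p.2} →
      ∀ x y : S, c x y → d x y) :
    T2Space (Quotient c.toSetoid) ∧
    ∀ (Y : Type u) (tY : TopologicalSpace Y), T2Space Y →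
      ∀ f : S → Y, Continuous f →
        ∃! g : Quotient c.toSetoid → Y,
          Continuous g ∧ ∀ x : S, g (Quotient.mk c.toSetoid x) = f x := by
  classical
  -- saturations of open sets are open
  have key : ∀ (A : Set S), IsOpen A → IsOpen {y : S | ∃ x ∈ A, c x y} := by
    intro A hA
    rw [isOpen_iff_forall_mem_open]
    rintro y ⟨x, hxA, hxy⟩
    rcases hopen with hL | hR
    · refine ⟨(fun s => y * s) '' ((fun s => x * s) ⁻¹' A), ?_,
        hL y _ ((hcont x).1.isOpen_preimage A hA), ⟨1, by simpa using hxA, by simp⟩⟩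
      rintro _ ⟨s, hs, rfl⟩
      exact ⟨x * s, hs, c.mul hxy (c.refl s)⟩
    · refine ⟨(fun s => s * y) '' ((fun s => s * x) ⁻¹' A), ?_,
        hR y _ ((hcont x).2.isOpen_preimage A hA), ⟨1, by simpa using hxA, by simp⟩⟩
      rintro _ ⟨s, hs, rfl⟩
      exact ⟨s * x, hs, c.mul (c.refl s) hxy⟩
  have hT2 : T2Space (Quotient c.toSetoid) := by
    refine ⟨fun z w hzw => ?_⟩
    obtain ⟨a, rfl⟩ := Quotient.exists_rep z
    obtain ⟨b, rfl⟩ := Quotient.exists_rep w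
    have hab : ¬ c a b := fun h => hzw (Quotient.sound h)
    obtain ⟨A, B, hAo, hBo, haA, hbB, hsub⟩ :=
      (isOpen_prod_iff.mp hclosed.isOpen_compl) a b hab
    set satA := {y : S | ∃ x ∈ A, c x y} with hsatA
    set satB := {y : S | ∃ x ∈ B, c x y} with hsatB
    refine ⟨Quotient.mk c.toSetoid '' satA, Quotient.mk c.toSetoid '' satB, ?_, ?_,
      ⟨a, ⟨a, haA, c.refl a⟩, rfl⟩, ⟨b, ⟨b, hbB, c.refl b⟩, rfl⟩, ?_⟩
    · rw [isOpen_coinduced]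
      show IsOpen (Quotient.mk c.toSetoid ⁻¹' (Quotient.mk c.toSetoid '' satA))
      have : Quotient.mk c.toSetoid ⁻¹' (Quotient.mk c.toSetoid '' satA) = satA := by
        ext y
        constructor
        · rintro ⟨p, ⟨x, hxA, hxp⟩, hp⟩
          exact ⟨x, hxA, c.trans hxp (Quotient.exact hp)⟩
        · intro hy; exact ⟨y, hy, rfl⟩
      rw [this]; exact key A hAo
    · rw [isOpen_coinduced]
      show IsOpen (Quotient.mk c.toSetoid ⁻¹' (Quotient.mk c.toSetoid '' satB))
      have : Quotient.mk c.toSetoid ⁻¹' (Quotient.mk c.toSetoid '' satB) = satB := by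
        ext y
        constructor
        · rintro ⟨p, ⟨x, hxB, hxp⟩, hp⟩
          exact ⟨x, hxB, c.trans hxp (Quotient.exact hp)⟩
        · intro hy; exact ⟨y, hy, rfl⟩
      rw [this]; exact key B hBo
    · rw [Set.disjoint_left]
      rintro _ ⟨p, ⟨x, hxA, hxp⟩, rfl⟩ ⟨r, ⟨x', hx'B, hx'r⟩, hr⟩
      have hpr : c p r := Quotient.exact hr.symm
      have : c x x' := c.trans hxp (c.trans hpr (c.symm hx'r))
      exact hsub (show (x, x') ∈ A ×ˢ B from ⟨hxA, hx'B⟩) this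
  refine ⟨hT2, fun Y tY hY f hf => ?_⟩
  haveI := hY
  -- the closed congruence induced by f
  set d : Con S :=
    { r := fun p q => ∀ a b : S, f (a * p * b) = f (a * q * b)
      iseqv := ⟨fun _ _ _ => rfl, fun h a b => (h a b).symm,
        fun h₁ h₂ a b => (h₁ a b).trans (h₂ a b)⟩
      mul' := by
        intro w x y z h₁ h₂ a b
        have e1 := h₁ a (y * b)
        have e2 := h₂ (a * x) b
        simp only [← mul_assoc] at e1 e2 ⊢
        exact e1.trans e2 } with hd
  have hdclosed : IsClosed {p : S × S | d p.1 p.2} := by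
    have : {p : S × S | d p.1 p.2} =
        ⋂ (a : S) (b : S), {p : S × S | f (a * p.1 * b) = f (a * p.2 * b)} := by
      ext p
      simp only [Set.mem_iInter, Set.mem_setOf_eq]
      rfl
    rw [this]
    refine isClosed_iInter fun a => isClosed_iInter fun b => ?_
    exact isClosed_eq
      (hf.comp (((hcont b).2).comp (((hcont a).1).comp continuous_fst)))
      (hf.comp (((hcont b).2).comp (((hcont a).1).comp continuous_snd)))
  have hc : ∀ x y : S, c x y → f x = f y := by
    intro x y h
    have := hsmall d hdclosed x y h 1 1
    simpa using this
  refine ⟨Quotient.lift f (fun x y h => hc x y h), ⟨?_, fun x => rfl⟩, ?_⟩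
  · exact Continuous.quotient_lift hf _
  · rintro g' ⟨g'c, hg'⟩
    funext z
    obtain ⟨x, rfl⟩ := Quotient.exists_rep z
    exact hg' x
end

section
/- The semiregularization commutes with products: for a family {X_i} of topological spaces, the semiregularization of the product space ∏ X_i equals the product of the semiregularizations ∏ (X_i)_sr. -/
/-!
Closure commutes with arbitrary boxes and interior with finite ones, so `int (cl (∏ uᵢ)) = ∏ int (cl uᵢ)`
for finite boxes. Hence a finite box of regular open sets is regular open in the product; conversely,
if `U = int (cl U)` contains a basic box `∏ uᵢ ∋ x`, then `U` also contains the regular box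
`∏ int (cl uᵢ) ∋ x`. So both topologies are generated by the finite boxes of regular open sets.
-/

open Set TopologicalSpace

section Pi

variable {ι : Type*} {X : ι → Type*} [∀ i, TopologicalSpace (X i)]

theorem interior_closure_pi_set {I : Set ι} (hI : I.Finite) (s : ∀ i, Set (X i)) :
    interior (closure (I.pi s)) = I.pi fun i => interior (closure (s i)) := by
  rw [closure_pi_set, interior_pi_set hI]

theorem exists_regular_pi_subset_of_interior_closure_eq {U : Set (∀ i, X i)}
    (hU : interior (closure U) = U) {x : ∀ i, X i} (hx : x ∈ U) :
    ∃ (s : ∀ i, Set (X i)) (I : Finset ι), (∀ i ∈ I, interior (closure (s i)) = s i) ∧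
      x ∈ (I : Set ι).pi s ∧ (I : Set ι).pi s ⊆ U := by
  obtain ⟨I, u, hu, huU⟩ := isOpen_pi_iff.mp (hU ▸ isOpen_interior) x hx
  refine ⟨fun i => interior (closure (u i)), I, fun i _ => interior_closure_idem,
    fun i hi => (hu i hi).1.subset_interior_closure (hu i hi).2, ?_⟩
  calc (I : Set ι).pi (fun i => interior (closure (u i)))
      = interior (closure ((I : Set ι).pi u)) := (interior_closure_pi_set I.finite_toSet u).symm
    _ ⊆ interior (closure U) := interior_mono (closure_mono huU)
    _ = U := hU

end Pi

/-- The semiregularization commutes with products: for a family of topological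
spaces, the semiregularization of the product equals the product of the
semiregularizations. -/
theorem stmt_19 {ι : Type*} {X : ι → Type*} [∀ i, TopologicalSpace (X i)] :
    srTop (∀ i, X i) = @Pi.topologicalSpace ι X (fun i => srTop (X i)) := by
  unfold srTop
  rw [pi_generateFrom_eq]
  refine le_antisymm (le_generateFrom ?_) (le_generateFrom ?_)
  · rintro _ ⟨s, I, hs, rfl⟩
    refine isOpen_generateFrom_of_mem ?_
    change interior (closure _) = _
    rw [interior_closure_pi_set I.finite_toSet]
    exact pi_congr rfl hs
  · intro U hU
    refine (@isOpen_iff_forall_mem_open _ (generateFrom _) U).mpr fun x hx => ?_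
    obtain ⟨s, I, hs, hxs, hsU⟩ := exists_regular_pi_subset_of_interior_closure_eq hU hx
    exact ⟨_, hsU, isOpen_generateFrom_of_mem ⟨s, I, hs, rfl⟩, hxs⟩
end
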